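/- For ω > 0 and 0 ≤ ι < 1, the derivative of relu_ω(t) = ω * log(exp(ι t / ω) + exp(t / ω)) at any real t equals ι + (1 - ι) * sigm((1 - ι) t / ω), where sigm(s) = 1/(1 + exp(-s)). -/

import Mathlib

noncomputable def sigm (t : ℝ) : ℝ := 1 / (1 + Real.exp (-t))

noncomputable def reluSmooth (ι ω t : ℝ) : ℝ :=
  ω * Real.log (Real.exp (ι * t / ω) + Real.exp (t / ω))

/-! `reluSmooth ι ω` is `ω` times the log-sum-exp of the linear maps `ι t / ω` and `t / ω`.
The derivative of `log (exp f + exp g)` averages `f'` and `g'` with the softmax weights, and the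
weight of `exp g` is `sigm (g - f)`. -/

open Real

theorem exp_div_exp_add_exp (a b : ℝ) : exp b / (exp a + exp b) = sigm (b - a) := by
  rw [sigm, neg_sub, exp_sub]
  field_simp
  ring

theorem hasDerivAt_log_exp_add_exp {f g : ℝ → ℝ} {f' g' x : ℝ} (hf : HasDerivAt f f' x)
    (hg : HasDerivAt g g' x) :
    HasDerivAt (fun y => log (exp (f y) + exp (g y))) (f' + (g' - f') * sigm (g x - f x)) x := by
  have hsum : HasDerivAt (fun y => exp (f y) + exp (g y)) (exp (f x) * f' + exp (g x) * g') x :=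
    hf.exp.add hg.exp
  convert hsum.log (by positivity) using 1
  rw [← exp_div_exp_add_exp]
  field_simp
  ring

theorem deriv_reluSmooth_general (ι ω t : ℝ) (hω : 0 < ω) :
    HasDerivAt (reluSmooth ι ω) (ι + (1 - ι) * sigm ((1 - ι) * t / ω)) t := by
  have h := (hasDerivAt_log_exp_add_exp (((hasDerivAt_id' t).const_mul ι).div_const ω)
    ((hasDerivAt_id' t).div_const ω)).const_mul ω
  refine h.congr_deriv ?_
  rw [show t / ω - ι * t / ω = (1 - ι) * t / ω by ring]
  field_simp

theorem deriv_reluSmooth (ι ω t : ℝ) (hω : 0 < ω) (hι0 : 0 ≤ ι) (hι1 : ι < 1) :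
    HasDerivAt (reluSmooth ι ω) (ι + (1 - ι) * sigm ((1 - ι) * t / ω)) t :=
  deriv_reluSmooth_general ι ω t hω
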